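/- arXiv:2604.24293 — 3 statements merged into one kernel-verified Lean document; each statement's English description precedes it below -/
import Mathlib

section
/- Let P be an N×N real row-stochastic irreducible matrix, and let π ∈ ℝ^N be a stationary distribution of P, i.e., π has strictly positive entries, πᵀP = πᵀ, and Σ_i π_i = 1. Then for every initial matrix H₀ ∈ ℝ^{N×m}, the trajectory H(t) = exp(−t(I − P)) H₀ of the directed consensus flow dH/dt = −(I − P)H converges as t → ∞ to the rank-one consensus state 𝟏(πᵀH₀), where 𝟏 ∈ ℝ^N is the all-ones vector. -/
/-!
The flow `S t = exp (-t (I - P)) = e^{-t} exp (t P)` is a semigroup of row-stochastic matrices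
fixing `πᵀ`, and irreducibility makes every entry of `S 1` positive, say at least `ε`. A
row-stochastic matrix with all entries at least `ε` maps a vector with values in an interval of
length `L` to one with values in an interval of length `(1 - ε) L` (Doeblin), while the average
`πᵀ v` is preserved and always lies in that interval. Hence `S t v` approaches `(πᵀ v) 𝟏` at rate
`(1 - ε) ^ ⌊t⌋`.
-/

open Matrix BigOperators Filter Topology NormedSpace
open scoped Nat

variable {ι : Type*} [Fintype ι]

theorem dotProduct_mem_Icc_of_mem_stdSimplex {p v : ι → ℝ} {a b : ℝ} (hp : p ∈ stdSimplex ℝ ι)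
    (hv : ∀ j, v j ∈ Set.Icc a b) : p ⬝ᵥ v ∈ Set.Icc a b := by
  have hconst (c : ℝ) : p ⬝ᵥ (fun _ => c) = c := by
    simp [dotProduct, ← Finset.sum_mul, hp.2]
  constructor
  · simpa [hconst] using
      dotProduct_le_dotProduct_of_nonneg_left (fun j => (hv j).1) hp.1 (w := p) (u := fun _ => a)
  · simpa [hconst] using
      dotProduct_le_dotProduct_of_nonneg_left (fun j => (hv j).2) hp.1 (w := p) (v := fun _ => b)

theorem dotProduct_mem_Icc_of_le_apply {p v : ι → ℝ} {a b ε : ℝ} (hp : p ∈ stdSimplex ℝ ι)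
    (hv : ∀ k, v k ∈ Set.Icc a b) {j : ι} (hε : ε ≤ p j) :
    p ⬝ᵥ v ∈ Set.Icc (a + ε * (v j - a)) (b - ε * (b - v j)) := by
  have hsub (c : ℝ) : p ⬝ᵥ v - c = ∑ k, p k * (v k - c) := by
    simp [dotProduct, mul_sub, ← Finset.sum_mul, hp.2]
  have hsub' (c : ℝ) : c - p ⬝ᵥ v = ∑ k, p k * (c - v k) := by
    simp [dotProduct, mul_sub, ← Finset.sum_mul, hp.2]
  have hlo : ε * (v j - a) ≤ p ⬝ᵥ v - a := by
    rw [hsub]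
    calc ε * (v j - a) ≤ p j * (v j - a) := by gcongr; exact sub_nonneg.2 (hv j).1
      _ ≤ ∑ k, p k * (v k - a) := Finset.single_le_sum
          (fun k _ => mul_nonneg (hp.1 k) (sub_nonneg.2 (hv k).1)) (Finset.mem_univ j)
  have hhi : ε * (b - v j) ≤ b - p ⬝ᵥ v := by
    rw [hsub']
    calc ε * (b - v j) ≤ p j * (b - v j) := by gcongr; exact sub_nonneg.2 (hv j).2
      _ ≤ ∑ k, p k * (b - v k) := Finset.single_le_sum
          (fun k _ => mul_nonneg (hp.1 k) (sub_nonneg.2 (hv k).2)) (Finset.mem_univ j)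
  constructor <;> linarith

namespace Matrix

variable [DecidableEq ι]

theorem row_mem_stdSimplex {Q : Matrix ι ι ℝ} (hQ : Q ∈ rowStochastic ℝ ι) (i : ι) :
    Q i ∈ stdSimplex ℝ ι :=
  ⟨fun _ => nonneg_of_mem_rowStochastic hQ, sum_row_of_mem_rowStochastic hQ i⟩

theorem mulVec_mem_Icc_of_mem_rowStochastic {Q : Matrix ι ι ℝ} {v : ι → ℝ} {a b : ℝ}
    (hQ : Q ∈ rowStochastic ℝ ι) (hv : ∀ j, v j ∈ Set.Icc a b) (i : ι) :
    (Q *ᵥ v) i ∈ Set.Icc a b :=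
  dotProduct_mem_Icc_of_mem_stdSimplex (row_mem_stdSimplex hQ i) hv

theorem abs_pow_mulVec_apply_sub_dotProduct_le {Q : Matrix ι ι ℝ} {π v : ι → ℝ}
    {a b ε : ℝ} (hQ : Q ∈ rowStochastic ℝ ι) (hε : ∀ i j, ε ≤ Q i j) (hπ : π ∈ stdSimplex ℝ ι)
    (hπQ : π ᵥ* Q = π) (hv : ∀ j, v j ∈ Set.Icc a b) (n : ℕ) (i : ι) :
    |(Q ^ n *ᵥ v) i - π ⬝ᵥ v| ≤ (1 - ε) ^ n * (b - a) := by
  induction n generalizing v a b with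
  | zero =>
    simpa [← Real.dist_eq] using
      Real.dist_le_of_mem_Icc (hv i) (dotProduct_mem_Icc_of_mem_stdSimplex hπ hv)
  | succ n ih =>
    have hQv (k : ι) : (Q *ᵥ v) k ∈ Set.Icc (a + ε * (v i - a)) (b - ε * (b - v i)) :=
      dotProduct_mem_Icc_of_le_apply (row_mem_stdSimplex hQ k) hv (hε k i)
    calc |(Q ^ (n + 1) *ᵥ v) i - π ⬝ᵥ v| = |(Q ^ n *ᵥ (Q *ᵥ v)) i - π ⬝ᵥ (Q *ᵥ v)| := by
          rw [pow_succ, ← mulVec_mulVec, dotProduct_mulVec, hπQ]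
      _ ≤ (1 - ε) ^ n * ((b - ε * (b - v i)) - (a + ε * (v i - a))) := ih hQv
      _ = (1 - ε) ^ (n + 1) * (b - a) := by ring

theorem exists_pos_le_apply_of_mem_rowStochastic [Nonempty ι] {Q : Matrix ι ι ℝ}
    (hQ : Q ∈ rowStochastic ℝ ι) (hpos : ∀ i j, 0 < Q i j) :
    ∃ ε, 0 < ε ∧ ε ≤ 1 ∧ ∀ i j, ε ≤ Q i j := by
  obtain ⟨p, hp⟩ := Finite.exists_min fun p : ι × ι => Q p.1 p.2
  exact ⟨Q p.1 p.2, hpos _ _, le_one_of_mem_rowStochastic hQ, fun i j => hp (i, j)⟩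

theorem tendsto_mulVec_of_semigroup {S : ℝ → Matrix ι ι ℝ} {π : ι → ℝ}
    (hS : ∀ t, 0 ≤ t → S t ∈ rowStochastic ℝ ι)
    (hS_add : ∀ s t, 0 ≤ s → 0 ≤ t → S (s + t) = S s * S t) (hS_pos : ∀ i j, 0 < S 1 i j)
    (hπ : π ∈ stdSimplex ℝ ι) (hπS : ∀ t, 0 ≤ t → π ᵥ* S t = π) (v : ι → ℝ) :
    Tendsto (fun t => S t *ᵥ v) atTop (𝓝 fun _ => π ⬝ᵥ v) := by
  refine tendsto_pi_nhds.2 fun i => ?_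
  have : Nonempty ι := ⟨i⟩
  obtain ⟨ε, hε_pos, hε_le, hε⟩ := exists_pos_le_apply_of_mem_rowStochastic (hS 1 zero_le_one) hS_pos
  have hS_floor (n : ℕ) (t : ℝ) (ht : n ≤ t) : S t = S 1 ^ n * S (t - n) := by
    induction n generalizing t with
    | zero => simp
    | succ n ih =>
      push_cast at ht ⊢
      rw [ih t (by linarith), pow_succ, mul_assoc, ← hS_add _ _ zero_le_one (by linarith)]
      congr 2
      ring
  have hbound (t : ℝ) (ht : 0 ≤ t) :
      |(S t *ᵥ v) i - π ⬝ᵥ v| ≤ (1 - ε) ^ ⌊t⌋₊ * (2 * ‖v‖) := by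
    have hn : (⌊t⌋₊ : ℝ) ≤ t := Nat.floor_le ht
    have hv (j : ι) : v j ∈ Set.Icc (-‖v‖) ‖v‖ := abs_le.1 (norm_le_pi_norm v j)
    have hπw : π ⬝ᵥ (S (t - ⌊t⌋₊) *ᵥ v) = π ⬝ᵥ v := by
      rw [dotProduct_mulVec, hπS _ (sub_nonneg.2 hn)]
    rw [hS_floor _ t hn, ← mulVec_mulVec, ← hπw]
    refine (abs_pow_mulVec_apply_sub_dotProduct_le (hS 1 zero_le_one) hε hπ (hπS 1 zero_le_one)
      (mulVec_mem_Icc_of_mem_rowStochastic (hS _ (sub_nonneg.2 hn)) hv) _ i).trans_eq ?_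
    ring
  have hlim : Tendsto (fun t : ℝ => (1 - ε) ^ ⌊t⌋₊ * (2 * ‖v‖)) atTop (𝓝 0) := by
    simpa using ((tendsto_pow_atTop_nhds_zero_of_lt_one (by linarith) (by linarith)).comp
      tendsto_nat_floor_atTop).mul_const (2 * ‖v‖)
  rw [tendsto_iff_dist_tendsto_zero]
  exact squeeze_zero' (Eventually.of_forall fun t => dist_nonneg)
    ((eventually_ge_atTop 0).mono hbound) hlim

theorem hasSum_exp {𝕂 : Type*} [RCLike 𝕂] (A : Matrix ι ι 𝕂) :
    HasSum (fun n => (n ! : 𝕂)⁻¹ • A ^ n) (exp A) :=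
  open scoped Norms.Operator in exp_series_hasSum_exp' A

theorem exp_mulVec_of_mulVec_eq_zero {𝕂 : Type*} [RCLike 𝕂] {A : Matrix ι ι 𝕂} {v : ι → 𝕂}
    (hA : A *ᵥ v = 0) : exp A *ᵥ v = v := by
  have hsum := (hasSum_exp A).map (mulVec.addMonoidHomLeft v)
    (continuous_id.matrix_mulVec continuous_const)
  refine hsum.unique ?_
  convert hasSum_single 0 fun n hn => ?_
  · simp [mulVec.addMonoidHomLeft]
  · obtain ⟨n, rfl⟩ := Nat.exists_eq_succ_of_ne_zero hn
    simp [mulVec.addMonoidHomLeft, pow_succ, ← mulVec_mulVec, hA, smul_mulVec]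

theorem vecMul_exp_of_vecMul_eq_zero {𝕂 : Type*} [RCLike 𝕂] {A : Matrix ι ι 𝕂} {v : ι → 𝕂}
    (hA : v ᵥ* A = 0) : v ᵥ* exp A = v := by
  rw [← mulVec_transpose, ← exp_transpose]
  exact exp_mulVec_of_mulVec_eq_zero (by rwa [mulVec_transpose])

theorem hasSum_exp_apply (A : Matrix ι ι ℝ) (i j : ι) :
    HasSum (fun n => (n ! : ℝ)⁻¹ * (A ^ n) i j) (exp A i j) :=
  Pi.hasSum.1 (Pi.hasSum.1 (hasSum_exp A) i) j

theorem exp_apply_nonneg {A : Matrix ι ι ℝ} (hA : ∀ i j, 0 ≤ A i j) (i j : ι) : 0 ≤ exp A i j :=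
  (hasSum_exp_apply A i j).nonneg fun n => mul_nonneg (by positivity) (pow_apply_nonneg hA n i j)

theorem exp_apply_pos {A : Matrix ι ι ℝ} (hA : ∀ i j, 0 ≤ A i j) {n : ℕ} {i j : ι}
    (hn : 0 < (A ^ n) i j) : 0 < exp A i j :=
  (by positivity : 0 < (n ! : ℝ)⁻¹ * (A ^ n) i j).trans_le <| le_hasSum (hasSum_exp_apply A i j) n
    fun k _ => mul_nonneg (by positivity) (pow_apply_nonneg hA k i j)

theorem exp_neg_smul_one_sub (t : ℝ) (P : Matrix ι ι ℝ) :
    exp (-(t • (1 - P))) = Real.exp (-t) • exp (t • P) := by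
  have hsplit : -(t • (1 - P)) = (-t) • (1 : Matrix ι ι ℝ) + t • P := by module
  have hexp : exp ((-t) • (1 : Matrix ι ι ℝ)) = Real.exp (-t) • 1 := by
    rw [smul_one_eq_diagonal, exp_diagonal, smul_one_eq_diagonal, Pi.exp_def, Real.exp_eq_exp_ℝ]
  rw [hsplit, exp_add_of_commute _ _ ((Commute.one_left _).smul_left _), hexp, smul_one_mul]

theorem exp_neg_add_smul (s t : ℝ) (A : Matrix ι ι ℝ) :
    exp (-((s + t) • A)) = exp (-(s • A)) * exp (-(t • A)) := by
  rw [add_smul, neg_add]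
  exact exp_add_of_commute _ _ (((Commute.refl A).smul_left s).smul_right t).neg_left.neg_right

theorem exp_neg_smul_one_sub_mem_rowStochastic {P : Matrix ι ι ℝ} (hP : P ∈ rowStochastic ℝ ι)
    {t : ℝ} (ht : 0 ≤ t) : exp (-(t • (1 - P))) ∈ rowStochastic ℝ ι := by
  refine ⟨fun i j => ?_, exp_mulVec_of_mulVec_eq_zero ?_⟩
  · rw [exp_neg_smul_one_sub, smul_apply, smul_eq_mul]
    exact mul_nonneg (Real.exp_pos _).le
      (exp_apply_nonneg (fun _ _ => mul_nonneg ht (nonneg_of_mem_rowStochastic hP)) i j)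
  · rw [neg_mulVec, smul_mulVec, sub_mulVec, one_mulVec, one_vecMul_of_mem_rowStochastic hP,
      sub_self, smul_zero, neg_zero]

theorem exp_neg_one_smul_one_sub_apply_pos {P : Matrix ι ι ℝ} (hP : ∀ i j, 0 ≤ P i j) {i j : ι}
    (hij : ∃ k, 0 < (P ^ k) i j) : 0 < exp (-((1 : ℝ) • (1 - P))) i j := by
  obtain ⟨k, hk⟩ := hij
  rw [exp_neg_smul_one_sub, one_smul, smul_apply, smul_eq_mul]
  exact mul_pos (Real.exp_pos _) (exp_apply_pos hP hk)

theorem vecMul_exp_neg_smul_one_sub {P : Matrix ι ι ℝ} {π : ι → ℝ} (hπ : π ᵥ* P = π) (t : ℝ) :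
    π ᵥ* exp (-(t • (1 - P))) = π :=
  vecMul_exp_of_vecMul_eq_zero <| by
    rw [vecMul_neg, vecMul_smul, vecMul_sub, vecMul_one, hπ, sub_self, smul_zero, neg_zero]

end Matrix

/-- **Consensus trap under irreducible positive mixing (convergence part).**
If `P` is row-stochastic and irreducible and `π` is a stationary distribution of `P`
(strictly positive entries, `πᵀP = πᵀ`, `∑ π i = 1`), then for every initial
matrix `H₀ ∈ ℝ^{N×m}` the trajectory `H(t) = exp(−t(I−P)) H₀` of the consensus
flow `dH/dt = −(I−P)H` converges as `t → ∞` to the rank-one state `𝟏 (πᵀ H₀)`. -/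
theorem consensus_flow_converges_to_rank_one
    (N m : ℕ) (P : Matrix (Fin N) (Fin N) ℝ)
    (hnonneg : ∀ i j, 0 ≤ P i j)
    (hrow : ∀ i, ∑ j, P i j = 1)
    (hirr : ∀ i j, ∃ k : ℕ, 0 < k ∧ 0 < (P ^ k) i j)
    (π : Fin N → ℝ)
    (hπpos : ∀ i, 0 < π i)
    (hπstat : Matrix.vecMul π P = π)
    (hπsum : ∑ i, π i = 1)
    (H₀ : Matrix (Fin N) (Fin m) ℝ) :
    Tendsto (fun t : ℝ => (NormedSpace.exp (-(t • ((1 : Matrix (Fin N) (Fin N) ℝ) - P)))) * H₀)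
      atTop
      (𝓝 (Matrix.of fun (_ : Fin N) (k : Fin m) => ∑ j, π j * H₀ j k)) := by
  have hP : P ∈ rowStochastic ℝ (Fin N) := mem_rowStochastic_iff_sum.2 ⟨hnonneg, hrow⟩
  have hcol (v : Fin N → ℝ) :
      Tendsto (fun t : ℝ => exp (-(t • (1 - P))) *ᵥ v) atTop (𝓝 fun _ => π ⬝ᵥ v) :=
    tendsto_mulVec_of_semigroup (fun _ ht => exp_neg_smul_one_sub_mem_rowStochastic hP ht)
      (fun s t _ _ => exp_neg_add_smul s t _)
      (fun i j => exp_neg_one_smul_one_sub_apply_pos hnonneg ((hirr i j).imp fun _ => And.right))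
      ⟨fun i => (hπpos i).le, hπsum⟩ (fun t _ => vecMul_exp_neg_smul_one_sub hπstat t) v
  exact tendsto_pi_nhds.2 fun i => tendsto_pi_nhds.2 fun k =>
    tendsto_pi_nhds.1 (hcol fun j => H₀ j k) i
end

section
/- Let N ≥ 1, α > 0, and let t ↦ P(t) be a family of N×N real row-stochastic matrices with P_{ij}(t) ≥ α for all i, j and all t ≥ 0, such that t ↦ P(t) is continuous. Let x : [0,∞) → ℝ^N be differentiable and satisfy ẋ(t) = −(I − P(t)) x(t) for all t ≥ 0. Then diam(x(t)) ≤ e^{−2αt} · diam(x(0)) for all t ≥ 0, where diam(x) := max_i x_i − min_i x_i. -/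
/-! The Euler step `x ↦ x + h (P x - x)` is the convex combination `(1 - h) x + h P x`, and
a row-stochastic `P` with entries `≥ α` pulls every coordinate of `P x` at least `α · diam x`
away from both extreme values of `x`, so one step shrinks the diameter by the factor
`1 - 2αh`. Since `x(t + h) = x(t) + h ẋ(t) + o(h)` and `diam` is `2`-Lipschitz for the sup
norm, the right Dini derivative of `diam (x t)` is at most `-2α diam (x t)`, and Grönwall's
inequality integrates this. -/

open Matrix BigOperators

/-- The diameter of a vector: `diam x = max_i x_i − min_i x_i`. -/
noncomputable def vecDiam {N : ℕ} (x : Fin N → ℝ) : ℝ := (⨆ i, x i) - (⨅ i, x i)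

open Filter Topology Set

theorem Finset.sum_mul_le_sub_mul {ι : Type*} [Fintype ι] {w v : ι → ℝ} {M : ℝ}
    (hw : ∀ j, 0 ≤ w j) (hw₁ : ∑ j, w j = 1) (hv : ∀ j, v j ≤ M) (j₀ : ι) :
    ∑ j, w j * v j ≤ M - w j₀ * (M - v j₀) := by
  have := Finset.single_le_sum (f := fun j => w j * (M - v j))
    (fun j _ => mul_nonneg (hw j) (sub_nonneg.2 (hv j))) (Finset.mem_univ j₀)
  simp only [mul_sub, Finset.sum_sub_distrib, ← Finset.sum_mul, hw₁, one_mul] at this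
  linarith

theorem Finset.add_mul_le_sum_mul {ι : Type*} [Fintype ι] {w v : ι → ℝ} {m : ℝ}
    (hw : ∀ j, 0 ≤ w j) (hw₁ : ∑ j, w j = 1) (hv : ∀ j, m ≤ v j) (j₀ : ι) :
    m + w j₀ * (v j₀ - m) ≤ ∑ j, w j * v j := by
  have := Finset.sum_mul_le_sub_mul (v := -v) hw hw₁ (fun j => neg_le_neg (hv j)) j₀
  simp only [Pi.neg_apply, mul_neg, Finset.sum_neg_distrib] at this
  linarith

theorem sub_le_vecDiam {N : ℕ} (x : Fin N → ℝ) (i j : Fin N) : x i - x j ≤ vecDiam x :=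
  sub_le_sub (le_ciSup (Set.finite_range x).bddAbove i) (ciInf_le (Set.finite_range x).bddBelow j)

section vecDiam

variable {N : ℕ} [Nonempty (Fin N)]

theorem vecDiam_le {x : Fin N → ℝ} {d : ℝ} (h : ∀ i j, x i - x j ≤ d) : vecDiam x ≤ d := by
  have : (⨆ i, x i) ≤ d + ⨅ j, x j :=
    ciSup_le fun i => by
      have : x i - d ≤ ⨅ j, x j := le_ciInf fun j => by linarith [h i j]
      linarith
  rw [vecDiam]
  linarith

theorem exists_vecDiam_eq_sub (x : Fin N → ℝ) : ∃ i j, vecDiam x = x i - x j := by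
  obtain ⟨i, hi⟩ := Finite.exists_max x
  obtain ⟨j, hj⟩ := Finite.exists_min x
  exact ⟨i, j, le_antisymm (vecDiam_le fun k l => by linarith [hi k, hj l]) (sub_le_vecDiam x i j)⟩

theorem vecDiam_nonneg (x : Fin N → ℝ) : 0 ≤ vecDiam x := by
  obtain ⟨i⟩ := ‹Nonempty (Fin N)›
  simpa using sub_le_vecDiam x i i

theorem vecDiam_add_le (a b : Fin N → ℝ) : vecDiam (a + b) ≤ vecDiam a + vecDiam b :=
  vecDiam_le fun i j => by
    simp only [Pi.add_apply]
    linarith [sub_le_vecDiam a i j, sub_le_vecDiam b i j]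

theorem vecDiam_smul_le {c : ℝ} (hc : 0 ≤ c) (a : Fin N → ℝ) :
    vecDiam (c • a) ≤ c * vecDiam a :=
  vecDiam_le fun i j => by
    simpa only [Pi.smul_apply, smul_eq_mul, ← mul_sub] using
      mul_le_mul_of_nonneg_left (sub_le_vecDiam a i j) hc

theorem vecDiam_le_two_mul_norm (a : Fin N → ℝ) : vecDiam a ≤ 2 * ‖a‖ :=
  vecDiam_le fun i j => by
    have hi := abs_le.1 (Real.norm_eq_abs (a i) ▸ norm_le_pi_norm a i)
    have hj := abs_le.1 (Real.norm_eq_abs (a j) ▸ norm_le_pi_norm a j)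
    linarith [hi.2, hj.1]

theorem vecDiam_le_add_two_mul_norm_sub (a b : Fin N → ℝ) :
    vecDiam a ≤ vecDiam b + 2 * ‖a - b‖ := by
  have := vecDiam_add_le b (a - b)
  rw [add_sub_cancel] at this
  linarith [vecDiam_le_two_mul_norm (a - b)]

theorem lipschitzWith_vecDiam : LipschitzWith 2 (vecDiam : (Fin N → ℝ) → ℝ) :=
  LipschitzWith.of_le_add_mul 2 fun a b => by
    simpa [dist_eq_norm] using vecDiam_le_add_two_mul_norm_sub a b

theorem vecDiam_mulVec_le {α : ℝ} {P : Matrix (Fin N) (Fin N) ℝ}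
    (hrow : ∀ i, ∑ j, P i j = 1) (hnonneg : ∀ i j, 0 ≤ P i j) (hpos : ∀ i j, α ≤ P i j)
    (v : Fin N → ℝ) : vecDiam (P *ᵥ v) ≤ (1 - 2 * α) * vecDiam v := by
  obtain ⟨i₀, j₀, hD⟩ := exists_vecDiam_eq_sub v
  have hmax : ∀ j, v j ≤ v i₀ := fun j => by linarith [sub_le_vecDiam v j j₀]
  have hmin : ∀ j, v j₀ ≤ v j := fun j => by linarith [sub_le_vecDiam v i₀ j]
  refine vecDiam_le fun i k => ?_
  have hup := Finset.sum_mul_le_sub_mul (hnonneg i) (hrow i) hmax j₀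
  have hlow := Finset.add_mul_le_sum_mul (hnonneg k) (hrow k) hmin i₀
  have hD₀ : 0 ≤ v i₀ - v j₀ := hD ▸ vecDiam_nonneg v
  rw [hD]
  simp only [mulVec, dotProduct]
  nlinarith [mul_le_mul_of_nonneg_right (hpos i j₀) hD₀,
    mul_le_mul_of_nonneg_right (hpos k i₀) hD₀]

theorem vecDiam_add_smul_mulVec_sub_le {α h : ℝ} {P : Matrix (Fin N) (Fin N) ℝ}
    (hrow : ∀ i, ∑ j, P i j = 1) (hnonneg : ∀ i j, 0 ≤ P i j) (hpos : ∀ i j, α ≤ P i j)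
    (h₀ : 0 ≤ h) (h₁ : h ≤ 1) (v : Fin N → ℝ) :
    vecDiam (v + h • (P *ᵥ v - v)) ≤ (1 - 2 * α * h) * vecDiam v := by
  have hconvex : v + h • (P *ᵥ v - v) = (1 - h) • v + h • P *ᵥ v := by module
  calc vecDiam (v + h • (P *ᵥ v - v))
      ≤ (1 - h) * vecDiam v + h * vecDiam (P *ᵥ v) := by
        rw [hconvex]
        exact (vecDiam_add_le _ _).trans
          (add_le_add (vecDiam_smul_le (by linarith) v) (vecDiam_smul_le h₀ _))
    _ ≤ (1 - h) * vecDiam v + h * ((1 - 2 * α) * vecDiam v) := by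
        gcongr
        exact vecDiam_mulVec_le hrow hnonneg hpos v
    _ = (1 - 2 * α * h) * vecDiam v := by ring

theorem HasDerivAt.eventually_vecDiam_le {x : ℝ → Fin N → ℝ} {v : Fin N → ℝ} {s c : ℝ}
    (hx : HasDerivAt x v s) (hc : 0 < c) :
    ∀ᶠ z in 𝓝[>] s, vecDiam (x z) ≤ vecDiam (x s + (z - s) • v) + c * (z - s) := by
  have hlo := (hasDerivAt_iff_isLittleO.1 hx).def (half_pos hc)
  filter_upwards [nhdsWithin_le_nhds hlo, self_mem_nhdsWithin] with z hz (hzs : s < z)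
  rw [Real.norm_eq_abs, abs_of_pos (sub_pos.2 hzs), sub_sub] at hz
  linarith [vecDiam_le_add_two_mul_norm_sub (x z) (x s + (z - s) • v)]

end vecDiam

theorem frequently_slope_lt_of_forall_eventually_le {f : ℝ → ℝ} {s a r : ℝ}
    (h : ∀ c > 0, ∀ᶠ z in 𝓝[>] s, f z ≤ f s + (a + c) * (z - s)) (hr : a < r) :
    ∃ᶠ z in 𝓝[>] s, (z - s)⁻¹ * (f z - f s) < r := by
  refine Eventually.frequently ?_
  filter_upwards [h ((r - a) / 2) (by linarith), self_mem_nhdsWithin] with z hz (hzs : s < z)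
  rw [inv_mul_lt_iff₀ (sub_pos.2 hzs)]
  nlinarith

theorem timeVarying_consensus_diam_contraction_general
    (N : ℕ) (hN : 1 ≤ N) (α : ℝ)
    (P : ℝ → Matrix (Fin N) (Fin N) ℝ)
    (hrow : ∀ t ≥ (0:ℝ), ∀ i, ∑ j, P t i j = 1)
    (hnonneg : ∀ t ≥ (0:ℝ), ∀ i j, 0 ≤ P t i j)
    (hpos : ∀ t ≥ (0:ℝ), ∀ i j, α ≤ P t i j)
    (x : ℝ → Fin N → ℝ)
    (hode : ∀ t ≥ (0:ℝ), HasDerivAt x ((P t).mulVec (x t) - x t) t) :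
    ∀ t ≥ (0:ℝ), vecDiam (x t) ≤ Real.exp (-2 * α * t) * vecDiam (x 0) := by
  have : Nonempty (Fin N) := ⟨⟨0, hN⟩⟩
  intro t ht
  have hcont : ContinuousOn (fun s => vecDiam (x s)) (Icc 0 t) := fun s hs =>
    (lipschitzWith_vecDiam.continuous.continuousAt.comp
      (hode s hs.1).continuousAt).continuousWithinAt
  have hslope : ∀ s ∈ Ico 0 t, ∀ r, -(2 * α) * vecDiam (x s) < r →
      ∃ᶠ z in 𝓝[>] s, (z - s)⁻¹ * (vecDiam (x z) - vecDiam (x s)) < r := by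
    intro s hs r hr
    refine frequently_slope_lt_of_forall_eventually_le (fun c hc => ?_) hr
    filter_upwards [(hode s hs.1).eventually_vecDiam_le hc, Ioo_mem_nhdsGT (lt_add_one s)]
      with z hz hz'
    have hstep := vecDiam_add_smul_mulVec_sub_le (hrow s hs.1) (hnonneg s hs.1) (hpos s hs.1)
      (sub_nonneg.2 hz'.1.le) (by linarith [hz'.2]) (x s)
    linarith
  have := le_gronwallBound_of_liminf_deriv_right_le hcont hslope le_rfl
    (fun s _ => (add_zero _).ge) t (right_mem_Icc.2 ht)
  rwa [gronwallBound_ε0, sub_zero, mul_comm, ← neg_mul] at this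

/-- **Instantaneous diameter contraction for the time-varying consensus flow.**
If `P(t)` is continuous in `t`, row-stochastic, and uniformly positive
(`P_{ij}(t) ≥ α`) for all `t ≥ 0`, and `x` solves `ẋ = −(I − P(t)) x` on `[0,∞)`,
then `diam(x(t)) ≤ e^{−2αt} diam(x(0))` for all `t ≥ 0`. -/
theorem timeVarying_consensus_diam_contraction
    (N : ℕ) (hN : 1 ≤ N) (α : ℝ) (hα : 0 < α)
    (P : ℝ → Matrix (Fin N) (Fin N) ℝ)
    (hPcont : Continuous P)
    (hrow : ∀ t ≥ (0:ℝ), ∀ i, ∑ j, P t i j = 1)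
    (hnonneg : ∀ t ≥ (0:ℝ), ∀ i j, 0 ≤ P t i j)
    (hpos : ∀ t ≥ (0:ℝ), ∀ i j, α ≤ P t i j)
    (x : ℝ → Fin N → ℝ)
    (hode : ∀ t ≥ (0:ℝ), HasDerivAt x ((P t).mulVec (x t) - x t) t) :
    ∀ t ≥ (0:ℝ), vecDiam (x t) ≤ Real.exp (-2 * α * t) * vecDiam (x 0) :=
  timeVarying_consensus_diam_contraction_general N hN α P hrow hnonneg hpos x hode
end

section
/- Let F ∈ ℝ with |F| > 2/(3√3), and let u* be the unique real root of u³ − u = F. Then every differentiable function u : [0,∞) → ℝ satisfying u′(t) = u(t) − u(t)³ + F for all t ≥ 0 converges to u* as t → ∞; in particular, if F > 0 the trajectory polarizes to the positive (connected) well and if F < 0 to the negative (insulated) well. -/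
open Filter Topology

/-- **Force-margin polarization of the edge potential.**
If `|F| > 2/(3√3)` and `u*` is the unique real root of `u³ − u = F`, then every
differentiable `u : [0,∞) → ℝ` solving `u′ = u − u³ + F` converges to `u*` as
`t → ∞`; in particular, `u* > 0` (connected well) if `F > 0` and `u* < 0`
(insulated well) if `F < 0`. -/
theorem doubleWell_force_margin_polarization
    (F : ℝ) (hF : 2 / (3 * Real.sqrt 3) < |F|)
    (ustar : ℝ)
    (hroot : ustar ^ 3 - ustar = F)
    (huniq : ∀ v : ℝ, v ^ 3 - v = F → v = ustar)
    (u : ℝ → ℝ)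
    (hode : ∀ t ≥ (0:ℝ), HasDerivAt u (u t - (u t) ^ 3 + F) t) :
    Tendsto u atTop (𝓝 ustar) ∧ (0 < F → 0 < ustar) ∧ (F < 0 → ustar < 0) := by
  subst hroot
  have h3 : (0:ℝ) < Real.sqrt 3 := Real.sqrt_pos.mpr (by norm_num)
  have hs3 : Real.sqrt 3 ^ 2 = 3 := Real.sq_sqrt (by norm_num)
  -- Step 1: ustar² > 4/3
  have hsq : 4/3 < ustar ^ 2 := by
    by_contra hcon
    push_neg at hcon
    have hF2 : (ustar ^ 3 - ustar) ^ 2 ≤ 4/27 := by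
      nlinarith [mul_nonneg (by linarith : (0:ℝ) ≤ 4/3 - ustar^2)
        (sq_nonneg (ustar^2 - 1/3)), sq_nonneg ustar]
    have h0 : (0:ℝ) < 2 / (3 * Real.sqrt 3) := by positivity
    have hlt : (2 / (3 * Real.sqrt 3)) ^ 2 < (ustar ^ 3 - ustar) ^ 2 := by
      have := sq_abs (ustar ^ 3 - ustar)
      nlinarith [abs_nonneg (ustar ^ 3 - ustar)]
    have heq : (2 / (3 * Real.sqrt 3)) ^ 2 = 4/27 := by
      rw [div_pow]; rw [mul_pow]; rw [hs3]; norm_num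
    rw [heq] at hlt; linarith
  set c : ℝ := 3 * ustar ^ 2 / 4 - 1 with hc
  have hcpos : 0 < c := by simp only [hc]; linarith
  -- Lyapunov function
  set h : ℝ → ℝ := fun t => (u t - ustar) ^ 2 * Real.exp (2 * c * t) with hh
  have hd : ∀ t ≥ (0:ℝ), HasDerivAt h
      ((2 * (u t - ustar) ^ 1 * (u t - (u t) ^ 3 + (ustar ^ 3 - ustar))) * Real.exp (2 * c * t)
        + (u t - ustar) ^ 2 * (Real.exp (2 * c * t) * (2 * c * 1))) t := by
    intro t ht
    exact (((hode t ht).sub_const ustar).pow 2).mul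
      (((hasDerivAt_id t).const_mul (2 * c)).exp)
  have hE : ∀ t, (2 * (u t - ustar) ^ 1 * (u t - (u t) ^ 3 + (ustar ^ 3 - ustar)))
      * Real.exp (2 * c * t)
      + (u t - ustar) ^ 2 * (Real.exp (2 * c * t) * (2 * c * 1)) ≤ 0 := by
    intro t
    have hexp : 0 < Real.exp (2 * c * t) := Real.exp_pos _
    have key : 2 * (u t - ustar) ^ 1 * (u t - (u t) ^ 3 + (ustar ^ 3 - ustar))
        + (u t - ustar) ^ 2 * (2 * c * 1) ≤ 0 := by
      have := mul_nonneg (sq_nonneg (u t - ustar)) (sq_nonneg (u t + ustar / 2))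
      rw [hc]
      nlinarith [this]
    nlinarith [key, hexp]
  -- h is antitone on [0,∞)
  have hmono : AntitoneOn h (Set.Ici (0:ℝ)) := by
    apply antitoneOn_of_deriv_nonpos (convex_Ici 0)
    · intro x hx
      exact ((hd x hx).continuousAt).continuousWithinAt
    · intro x hx
      rw [interior_Ici] at hx
      exact ((hd x hx.le).differentiableAt).differentiableWithinAt
    · intro x hx
      rw [interior_Ici] at hx
      rw [(hd x hx.le).deriv]
      exact hE x
  have hbound : ∀ t ≥ (0:ℝ), (u t - ustar) ^ 2 ≤ h 0 * Real.exp (-(2 * c) * t) := by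
    intro t ht
    have h1 : h t ≤ h 0 := hmono Set.self_mem_Ici ht ht
    have hexp : 0 < Real.exp (2 * c * t) := Real.exp_pos _
    rw [neg_mul, Real.exp_neg, ← div_eq_mul_inv, le_div_iff₀ hexp]
    exact h1
  -- the bound tends to 0
  have hlim : Tendsto (fun t => h 0 * Real.exp (-(2 * c) * t)) atTop (𝓝 0) := by
    have h2 : Tendsto (fun t : ℝ => -(2 * c) * t) atTop atBot :=
      tendsto_id.const_mul_atTop_of_neg (by linarith)
    have := Real.tendsto_exp_atBot.comp h2
    simpa using this.const_mul (h 0)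
  have hg : Tendsto (fun t => (u t - ustar) ^ 2) atTop (𝓝 0) := by
    apply squeeze_zero' (Eventually.of_forall fun t => sq_nonneg _)
      ((eventually_ge_atTop (0:ℝ)).mono fun t ht => hbound t ht) hlim
  have habs : Tendsto (fun t => |u t - ustar|) atTop (𝓝 0) := by
    have := (Real.continuous_sqrt.tendsto 0).comp hg
    simpa only [Function.comp_def, Real.sqrt_sq_eq_abs, Real.sqrt_zero] using this
  have hsub : Tendsto (fun t => u t - ustar) atTop (𝓝 0) :=
    (tendsto_zero_iff_abs_tendsto_zero _).mpr habs
  refine ⟨?_, ?_, ?_⟩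
  · have := hsub.add_const ustar
    simpa using this
  · intro hFpos
    by_contra hcon
    push_neg at hcon
    nlinarith
  · intro hFneg
    by_contra hcon
    push_neg at hcon
    nlinarith
end
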